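/- arXiv:2210.08337 — 8 statements merged into one kernel-verified Lean document; each statement's English description precedes it below -/
import Mathlib

section
/- For every integer j ≥ 1, the sum of the absolute values of cos(hπ/(j+1)) for h = 1 to j equals cot(π/(2j+2)) − 1 if j is odd, and csc(π/(2j+2)) − 1 if j is even. -/
/-!
With `θ = π / (j + 1)`, the reflection `h ↦ j + 1 - h` exchanges the terms with `2h > j + 1`
and those with `2h < j + 1`, on which `cos (h θ) ≥ 0`; for odd `j` the middle term is
`cos (π / 2) = 0`. Hence the sum is `2 ∑_{h ≤ j / 2} cos (h θ)`, which the Dirichlet kernel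
identity evaluates to `sin ((j / 2 + 1 / 2) θ) / sin (θ / 2) - 1`. The angle `(j / 2 + 1 / 2) θ`
is `π / 2 - θ / 2` for odd `j` and `π / 2` for even `j`.
-/

open Real Finset

lemma sum_Icc_one_eq_add_sum_reflect {M : Type*} [AddCommMonoid M] (f : ℕ → M) {k m : ℕ}
    (hkm : k ≤ m) :
    ∑ h ∈ Icc 1 m, f h = ∑ h ∈ Icc 1 k, f h + ∑ h ∈ Icc 1 (m - k), f (m + 1 - h) := by
  change ∑ h ∈ Ioc 0 m, f h = ∑ h ∈ Ioc 0 k, f h + ∑ h ∈ Ioc 0 (m - k), f (m + 1 - h)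
  rw [← sum_Ioc_consecutive f (Nat.zero_le k) hkm]
  congr 1
  refine sum_nbij' (fun h ↦ m + 1 - h) (fun h ↦ m + 1 - h) ?_ ?_ ?_ ?_ ?_ <;>
    intro h hh <;> simp only [mem_Ioc] at hh ⊢ <;> grind

lemma cos_nat_mul_pi_div_nonneg {n h : ℕ} (hh : 2 * h ≤ n) : 0 ≤ cos (h * π / n) := by
  rcases Nat.eq_zero_or_pos n with rfl | hn
  · simp
  apply cos_nonneg_of_mem_Icc
  have : (2 * h : ℝ) ≤ n := by exact_mod_cast hh
  constructor
  · have : 0 ≤ (h * π / n : ℝ) := by positivity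
    linarith [pi_pos]
  · rw [div_le_div_iff₀ (by positivity) two_pos]
    nlinarith [pi_pos]

lemma abs_cos_sub_mul_pi_div {n h : ℕ} (hh : h ≤ n) (hn : n ≠ 0) :
    |cos ((n - h : ℕ) * π / n)| = |cos (h * π / n)| := by
  rw [Nat.cast_sub hh, sub_mul, sub_div, mul_div_cancel_left₀ π (by exact_mod_cast hn),
    cos_pi_sub, abs_neg]

lemma sum_abs_cos_eq_two_mul_sum_cos (j : ℕ) :
    ∑ h ∈ Icc 1 j, |cos (h * π / (j + 1))| =
      2 * ∑ h ∈ Icc 1 (j / 2), cos (h * π / (j + 1)) := by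
  have hcast : ((j + 1 : ℕ) : ℝ) = j + 1 := by push_cast; ring
  have habs : ∀ h, 2 * h ≤ j + 1 → |cos (h * π / (j + 1))| = cos (h * π / (j + 1)) := by
    intro h hh
    rw [← hcast]
    exact abs_of_nonneg (cos_nat_mul_pi_div_nonneg hh)
  have hlower : ∑ h ∈ Icc 1 (j - j / 2), |cos (h * π / (j + 1))| =
      ∑ h ∈ Icc 1 (j / 2), cos (h * π / (j + 1)) := by
    rw [sum_congr rfl fun h hh ↦ habs h (by simp only [mem_Icc] at hh; omega)]
    rcases Nat.even_or_odd j with ⟨k, rfl⟩ | ⟨k, rfl⟩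
    · rw [show k + k - (k + k) / 2 = (k + k) / 2 by omega]
    · have hmid : cos (((k + 1 : ℕ) : ℝ) * π / ((2 * k + 1 : ℕ) + 1)) = 0 := by
        rw [← cos_pi_div_two]; congr 1; push_cast; field_simp; ring
      rw [show 2 * k + 1 - (2 * k + 1) / 2 = k + 1 by omega, sum_Icc_succ_top (by omega), hmid,
        add_zero, show (2 * k + 1) / 2 = k by omega]
  have hupper : ∑ h ∈ Icc 1 (j / 2), |cos ((j + 1 - h : ℕ) * π / (j + 1))| =
      ∑ h ∈ Icc 1 (j / 2), cos (h * π / (j + 1)) := by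
    refine sum_congr rfl fun h hh ↦ ?_
    simp only [mem_Icc] at hh
    rw [← habs h (by omega), ← hcast, abs_cos_sub_mul_pi_div (by omega) (by omega)]
  rw [sum_Icc_one_eq_add_sum_reflect _ (Nat.sub_le j (j / 2)),
    Nat.sub_sub_self (Nat.div_le_self j 2), hlower, hupper, two_mul]

lemma sin_half_mul_one_add_two_mul_sum_cos (θ : ℝ) (k : ℕ) :
    sin (θ / 2) * (1 + 2 * ∑ h ∈ Icc 1 k, cos (h * θ)) = sin ((k + 1 / 2) * θ) := by
  have hsum : ∑ h ∈ Icc 1 k, cos (h * θ) = ∑ i ∈ range k, cos (θ * i + θ) := by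
    rw [← Ico_add_one_right_eq_Icc, sum_Ico_eq_sum_range, Nat.add_sub_cancel]
    refine sum_congr rfl fun i _ ↦ ?_
    push_cast
    ring_nf
  have hdiff : k * θ / 2 - ((k - 1) * θ / 2 + θ) = -(θ / 2) := by ring
  have hadd : k * θ / 2 + ((k - 1) * θ / 2 + θ) = (k + 1 / 2) * θ := by ring
  rw [mul_add, mul_left_comm, hsum, sin_mul_sum_cos, ← mul_assoc, two_mul_sin_mul_cos, hdiff,
    hadd, sin_neg]
  ring

theorem sum_abs_cos_eq_general (j : ℕ) :
    (Odd j → ∑ h ∈ Finset.Icc 1 j, |Real.cos (h * π / (j + 1))| =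
      Real.cot (π / (2 * j + 2)) - 1) ∧
    (Even j → ∑ h ∈ Finset.Icc 1 j, |Real.cos (h * π / (j + 1))| =
      1 / Real.sin (π / (2 * j + 2)) - 1) := by
  set θ := π / (j + 1) with hθ
  have hhalf : π / (2 * j + 2) = θ / 2 := by rw [hθ, div_div]; ring_nf
  have hsin : 0 < sin (θ / 2) := by
    apply sin_pos_of_pos_of_lt_pi (by positivity)
    rw [← hhalf, div_lt_iff₀ (by positivity)]
    nlinarith [pi_pos, j.cast_nonneg (α := ℝ)]
  have hsum : ∑ h ∈ Icc 1 j, |cos (h * π / (j + 1))| =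
      sin (((j / 2 : ℕ) + 1 / 2) * θ) / sin (θ / 2) - 1 := by
    rw [sum_abs_cos_eq_two_mul_sum_cos, eq_sub_iff_add_eq, eq_div_iff hsin.ne',
      ← sin_half_mul_one_add_two_mul_sum_cos]
    simp_rw [mul_div_assoc]
    ring
  rw [hsum, hhalf]
  refine ⟨fun ⟨k, hk⟩ ↦ ?_, fun ⟨k, hk⟩ ↦ ?_⟩
  · have hangle : ((k : ℝ) + 1 / 2) * θ = π / 2 - θ / 2 := by
      rw [hθ, hk]; push_cast; field_simp; ring
    rw [show j / 2 = k by omega, hangle, sin_pi_div_two_sub, cot_eq_cos_div_sin]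
  · have hangle : ((k : ℝ) + 1 / 2) * θ = π / 2 := by
      rw [hθ, hk]; push_cast; field_simp; ring
    rw [show j / 2 = k by omega, hangle, sin_pi_div_two]

theorem sum_abs_cos_eq (j : ℕ) (hj : 1 ≤ j) :
    (Odd j → ∑ h ∈ Finset.Icc 1 j, |Real.cos (h * π / (j + 1))| =
      Real.cot (π / (2 * j + 2)) - 1) ∧
    (Even j → ∑ h ∈ Finset.Icc 1 j, |Real.cos (h * π / (j + 1))| =
      1 / Real.sin (π / (2 * j + 2)) - 1) :=
  sum_abs_cos_eq_general j
end

section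
/- The sequence a_j = 2csc(π/(2j+6)) − 2csc(π/(2j+2)), j ≥ 0, is strictly increasing. -/
/-!
Writing `g y = 2 / sin (π / y)`, the `j`-th term is `g (2j + 6) - g (2j + 2)`, so
`a (j + 1) - a j = (g (y + 6) - g (y + 4)) - (g (y + 2) - g y)` with `y = 2j + 2`, which is positive
once `g` is strictly convex on `(1, ∞)`. Its derivative is `(2 / π) h (π / y)` with
`h t = t² cos t / sin² t`, and `h` is strictly decreasing on `(0, π)` because its derivative has the
sign of `2 sin t cos t - t (1 + cos² t) ≤ |sin t| (1 + cos² t) - t (1 + cos² t) < 0`.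
-/

open Real Set

theorem StrictConvexOn.sub_lt_sub_of_lt {𝕜 : Type*} [Field 𝕜] [LinearOrder 𝕜]
    [IsStrictOrderedRing 𝕜] {s : Set 𝕜} {f : 𝕜 → 𝕜} (hf : StrictConvexOn 𝕜 s f) {x y d : 𝕜}
    (hx : x ∈ s) (hyd : y + d ∈ s) (hxy : x < y) (hd : 0 < d) :
    f (x + d) - f x < f (y + d) - f y := by
  have hleft := hf.secant_strict_mono_aux1 hx hyd (lt_add_of_pos_right x hd) (by linarith)
  have hright := hf.secant_strict_mono_aux1 hx hyd hxy (lt_add_of_pos_right y hd)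
  have hsum : (y + d - x) * (f (x + d) + f y) < (y + d - x) * (f x + f (y + d)) := by
    linarith
  linarith [lt_of_mul_lt_mul_left hsum (by linarith : 0 ≤ y + d - x)]

theorem two_mul_sin_mul_cos_lt {t : ℝ} (ht : 0 < t) : 2 * sin t * cos t < t * (1 + cos t ^ 2) := by
  have hsin : |sin t| < t := by simpa [abs_of_pos ht] using abs_sin_lt_abs ht.ne'
  calc 2 * sin t * cos t ≤ |sin t| * (2 * |cos t|) := by
        have := le_abs_self (sin t * cos t); rw [abs_mul] at this; linarith
    _ ≤ |sin t| * (1 + cos t ^ 2) := by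
        gcongr; nlinarith [sq_abs (cos t), sq_nonneg (1 - |cos t|)]
    _ < t * (1 + cos t ^ 2) := by gcongr

theorem hasDerivAt_sq_mul_cos_div_sin_sq {t : ℝ} (ht : sin t ≠ 0) :
    HasDerivAt (fun t => t ^ 2 * cos t / sin t ^ 2)
      (t * (2 * sin t * cos t - t * (1 + cos t ^ 2)) / sin t ^ 3) t := by
  refine (((hasDerivAt_pow 2 t).fun_mul (hasDerivAt_cos t)).fun_div
    ((hasDerivAt_sin t).fun_pow 2) (pow_ne_zero 2 ht)).congr_deriv ?_
  field_simp
  norm_num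
  linear_combination (-(t ^ 2 * sin t)) * sin_sq_add_cos_sq t

theorem strictAntiOn_sq_mul_cos_div_sin_sq :
    StrictAntiOn (fun t => t ^ 2 * cos t / sin t ^ 2) (Ioo 0 π) := by
  have hsin : ∀ t ∈ Ioo 0 π, 0 < sin t := fun t ht => sin_pos_of_pos_of_lt_pi ht.1 ht.2
  refine strictAntiOn_of_deriv_neg (convex_Ioo 0 π) (fun t ht => ?_) fun t ht => ?_
  · exact (hasDerivAt_sq_mul_cos_div_sin_sq (hsin t ht).ne').continuousAt.continuousWithinAt
  · rw [interior_Ioo] at ht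
    rw [(hasDerivAt_sq_mul_cos_div_sin_sq (hsin t ht).ne').deriv]
    exact div_neg_of_neg_of_pos
      (mul_neg_of_pos_of_neg ht.1 (sub_neg.mpr (two_mul_sin_mul_cos_lt ht.1)))
      (pow_pos (hsin t ht) 3)

theorem hasDerivAt_inv_sin_pi_div {y : ℝ} (hy : y ≠ 0) (hs : sin (π / y) ≠ 0) :
    HasDerivAt (fun y => (sin (π / y))⁻¹) ((π / y) ^ 2 * cos (π / y) / sin (π / y) ^ 2 / π) y := by
  have hπy : HasDerivAt (fun y => π / y) (-π / y ^ 2) y := by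
    simpa [div_eq_mul_inv, neg_div] using (hasDerivAt_inv hy).const_mul π
  refine (hπy.sin.fun_inv hs).congr_deriv ?_
  field_simp

theorem strictConvexOn_inv_sin_pi_div : StrictConvexOn ℝ (Ioi 1) (fun y => (sin (π / y))⁻¹) := by
  have hmem : ∀ y ∈ Ioi (1 : ℝ), π / y ∈ Ioo 0 π := fun y hy =>
    ⟨div_pos pi_pos (zero_lt_one.trans hy), div_lt_self pi_pos hy⟩
  have hderiv : ∀ y ∈ Ioi (1 : ℝ), HasDerivAt (fun y => (sin (π / y))⁻¹)
      ((π / y) ^ 2 * cos (π / y) / sin (π / y) ^ 2 / π) y := fun y hy =>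
    hasDerivAt_inv_sin_pi_div (zero_lt_one.trans hy).ne'
      (sin_pos_of_pos_of_lt_pi (hmem y hy).1 (hmem y hy).2).ne'
  refine StrictMonoOn.strictConvexOn_of_deriv (convex_Ioi 1)
    (fun y hy => (hderiv y hy).continuousAt.continuousWithinAt) ?_
  rw [interior_Ioi]
  intro y hy z hz hyz
  rw [(hderiv y hy).deriv, (hderiv z hz).deriv]
  have hπ : π / z < π / y := div_lt_div_of_pos_left pi_pos (zero_lt_one.trans hy) hyz
  exact div_lt_div_of_pos_right
    (strictAntiOn_sq_mul_cos_div_sin_sq (hmem z hz) (hmem y hy) hπ) pi_pos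

theorem a_strictMono :
    StrictMono
      (fun j : ℕ => 2 / Real.sin (π / (2 * j + 6)) - 2 / Real.sin (π / (2 * j + 2))) := by
  refine strictMono_nat_of_lt_succ fun j => ?_
  have hj : (0 : ℝ) ≤ j := j.cast_nonneg
  have key := strictConvexOn_inv_sin_pi_div.sub_lt_sub_of_lt (x := 2 * j + 2) (y := 2 * j + 6)
    (d := 2) (mem_Ioi.mpr (by linarith)) (mem_Ioi.mpr (by linarith)) (by linarith) two_pos
  rw [show (2 : ℝ) * ↑(j + 1) + 2 = 2 * j + 2 + 2 by push_cast; ring,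
    show (2 : ℝ) * ↑(j + 1) + 6 = 2 * j + 6 + 2 by push_cast; ring]
  simp only [div_eq_mul_inv] at key ⊢
  linarith
end

section
/- The sequence b_j = 2cot(π/(2j+6)) − 2cot(π/(2j+2)), j ≥ 0, is strictly decreasing. -/
/-!
Write `f x = cot (π / x)`, so that `b_j = 2 (f (2j + 6) - f (2j + 2))`. For `x > 1` one has
`f' x = π / (x sin (π / x))²`, and `x sin (π / x) = π · sinc (π / x)` increases with `x` because
`sinc` decreases on `(0, π]` (concavity of `sin`). Hence `f'` decreases, so `f (x + c) - f x` has
negative derivative for every `c > 0`.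
-/

open Real Set

theorem Real.hasDerivAt_cot {x : ℝ} (h : sin x ≠ 0) : HasDerivAt cot (-1 / sin x ^ 2) x := by
  have hcot : cot = fun y => cos y / sin y := funext cot_eq_cos_div_sin
  rw [hcot]
  refine ((hasDerivAt_cos x).div (hasDerivAt_sin x) h).congr_deriv ?_
  field_simp
  linear_combination -sin_sq_add_cos_sq x

theorem Real.sin_div_lt_sin_div {x y : ℝ} (hx : 0 < x) (hxy : x < y) (hy : y ≤ π) :
    sin y / y < sin x / x := by
  have h0 : (0 : ℝ) ∈ Icc 0 π := ⟨le_rfl, pi_pos.le⟩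
  simpa using strictConcaveOn_sin_Icc.secant_strict_mono h0 ⟨hx.le, hxy.le.trans hy⟩
    ⟨hx.le.trans hxy.le, hy⟩ hx.ne' (hx.trans hxy).ne' hxy

theorem Real.sin_pi_div_pos {x : ℝ} (hx : 1 < x) : 0 < sin (π / x) :=
  sin_pos_of_pos_of_lt_pi (by positivity) (div_lt_self pi_pos hx)

theorem Real.mul_sin_pi_div_lt {x y : ℝ} (hx : 1 ≤ x) (hxy : x < y) :
    x * sin (π / x) < y * sin (π / y) := by
  have hx0 : 0 < x := by linarith
  have hy0 : 0 < y := hx0.trans hxy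
  have hsinc : sin (π / x) / (π / x) < sin (π / y) / (π / y) :=
    sin_div_lt_sin_div (by positivity) (div_lt_div_of_pos_left pi_pos hx0 hxy)
      (div_le_self pi_pos.le hx)
  have hmul : ∀ z : ℝ, 0 < z → z * sin (π / z) = π * (sin (π / z) / (π / z)) := by
    intro z hz
    field_simp
  rw [hmul x hx0, hmul y hy0]
  exact mul_lt_mul_of_pos_left hsinc pi_pos

theorem Real.hasDerivAt_cot_pi_div {x : ℝ} (hx : 1 < x) :
    HasDerivAt (fun y => cot (π / y)) (π / (x * sin (π / x)) ^ 2) x := by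
  have hx0 : x ≠ 0 := by positivity
  have hinner : HasDerivAt (fun y => π / y) (-π / x ^ 2) x := by
    simpa [div_eq_mul_inv] using (hasDerivAt_inv hx0).const_mul π
  refine ((hasDerivAt_cot (sin_pi_div_pos hx).ne').comp x hinner).congr_deriv ?_
  field_simp

theorem Real.strictAntiOn_cot_pi_div_add_sub_cot_pi_div {c : ℝ} (hc : 0 < c) :
    StrictAntiOn (fun x => cot (π / (x + c)) - cot (π / x)) (Ioi 1) := by
  have hderiv : ∀ x ∈ Ioi (1 : ℝ), HasDerivAt (fun x => cot (π / (x + c)) - cot (π / x))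
      (π / ((x + c) * sin (π / (x + c))) ^ 2 - π / (x * sin (π / x)) ^ 2) x := by
    intro x (hx : 1 < x)
    exact ((hasDerivAt_cot_pi_div (by linarith)).comp_add_const x c).sub
      (hasDerivAt_cot_pi_div hx)
  refine strictAntiOn_of_deriv_neg (convex_Ioi 1)
    (fun x hx => (hderiv x hx).continuousAt.continuousWithinAt) fun x hx => ?_
  rw [interior_Ioi] at hx
  have hx' : (1 : ℝ) < x := hx
  rw [(hderiv x hx).deriv, sub_neg]
  have hpos : 0 < x * sin (π / x) := mul_pos (by linarith) (sin_pi_div_pos hx')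
  have hlt := mul_sin_pi_div_lt hx'.le (lt_add_of_pos_right x hc)
  gcongr

theorem b_strictAnti :
    StrictAnti
      (fun j : ℕ => 2 * Real.cot (π / (2 * j + 6)) - 2 * Real.cot (π / (2 * j + 2))) := by
  intro m n hmn
  have hmem : ∀ j : ℕ, (2 * j + 2 : ℝ) ∈ Ioi 1 := fun j => by
    simp only [mem_Ioi]
    linarith [j.cast_nonneg (α := ℝ)]
  have key := strictAntiOn_cot_pi_div_add_sub_cot_pi_div four_pos (hmem m) (hmem n) (by gcongr)
  have h6 : ∀ j : ℕ, (2 * j + 2 : ℝ) + 4 = 2 * j + 6 := fun j => by ring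
  simp only [h6] at key ⊢
  linarith
end

section
/- For every real θ ∈ (0, π/2), cos²θ + 1 > 2 sinθ cosθ / θ. -/
open Real

theorem cos_sq_add_one_gt (θ : ℝ) (h0 : 0 < θ) (h1 : θ < π / 2) :
    Real.cos θ ^ 2 + 1 > 2 * Real.sin θ * Real.cos θ / θ := by
  have hc : 0 < Real.cos θ := Real.cos_pos_of_mem_Ioo ⟨by linarith [Real.pi_pos], h1⟩
  have hs : Real.sin θ < θ := Real.sin_lt h0
  have hs0 : 0 < Real.sin θ := Real.sin_pos_of_pos_of_lt_pi h0 (by linarith [Real.pi_pos])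
  have key : 2 * Real.sin θ * Real.cos θ / θ < 2 * Real.cos θ := by
    rw [div_lt_iff₀ h0]
    nlinarith
  nlinarith [sq_nonneg (Real.cos θ - 1)]
end

section
/- The function y(x) = csc(π/x) is strictly convex on the interval (2, ∞); equivalently, its second derivative is positive for all x > 2. -/
/-!
Writing `u = π / x ∈ (0, π/2)`, a direct computation gives
`(csc (π / ·))'' x = π (u (1 + cos² u) - 2 sin u cos u) / (x³ sin³ u)`, and the numerator is
positive because `2 sin u cos u < 2 u cos u ≤ u (1 + cos² u)`.
-/

open Real Filter Topology

theorem two_mul_sin_mul_cos_lt_mul_one_add_cos_sq {u : ℝ} (hu : 0 < u) (hc : 0 < cos u) :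
    2 * sin u * cos u < u * (1 + cos u ^ 2) := by
  nlinarith [sin_lt hu, mul_nonneg hu.le (sq_nonneg (1 - cos u))]

section OneDivSinDiv

variable (a : ℝ) {x : ℝ}

theorem hasDerivAt_const_div_id (hx : x ≠ 0) :
    HasDerivAt (fun x : ℝ => a / x) (-a / x ^ 2) x := by
  simpa [div_eq_mul_inv, neg_div] using (hasDerivAt_inv hx).const_mul a

theorem hasDerivAt_one_div_sin_div (hx : x ≠ 0) (hs : sin (a / x) ≠ 0) :
    HasDerivAt (fun x : ℝ => 1 / sin (a / x))
      (a * cos (a / x) / (x ^ 2 * sin (a / x) ^ 2)) x := by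
  refine ((hasDerivAt_const x (1 : ℝ)).fun_div (hasDerivAt_const_div_id a hx).sin hs
    ).congr_deriv ?_
  field_simp
  ring

theorem hasDerivAt_deriv_one_div_sin_div (hx : x ≠ 0) (hs : sin (a / x) ≠ 0) :
    HasDerivAt (fun x : ℝ => a * cos (a / x) / (x ^ 2 * sin (a / x) ^ 2))
      (a * (a / x * (1 + cos (a / x) ^ 2) - 2 * sin (a / x) * cos (a / x)) /
        (x ^ 3 * sin (a / x) ^ 3)) x := by
  have hu := hasDerivAt_const_div_id a hx
  refine ((hu.cos.const_mul a).fun_div ((hasDerivAt_pow 2 x).fun_mul (hu.sin.fun_pow 2))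
    (by simp [hx, hs])).congr_deriv ?_
  field_simp
  linear_combination (a ^ 2 * sin (a / x)) * sin_sq_add_cos_sq (a / x)

theorem iteratedDeriv_two_one_div_sin_div (hx : x ≠ 0) (hs : sin (a / x) ≠ 0) :
    iteratedDeriv 2 (fun x : ℝ => 1 / sin (a / x)) x =
      a * (a / x * (1 + cos (a / x) ^ 2) - 2 * sin (a / x) * cos (a / x)) /
        (x ^ 3 * sin (a / x) ^ 3) := by
  have hnear : ∀ᶠ y in 𝓝 x, y ≠ 0 ∧ sin (a / y) ≠ 0 :=
    (eventually_ne_nhds hx).and <|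
      (continuous_sin.continuousAt.comp (continuousAt_const.div continuousAt_id hx)).eventually_ne
        hs
  have hderiv : deriv (fun x : ℝ => 1 / sin (a / x)) =ᶠ[𝓝 x]
      fun x => a * cos (a / x) / (x ^ 2 * sin (a / x) ^ 2) :=
    hnear.mono fun y hy => (hasDerivAt_one_div_sin_div a hy.1 hy.2).deriv
  rw [iteratedDeriv_succ, iteratedDeriv_one, hderiv.deriv_eq]
  exact (hasDerivAt_deriv_one_div_sin_div a hx hs).deriv

end OneDivSinDiv

theorem csc_strictConvexOn :
    StrictConvexOn ℝ (Set.Ioi (2 : ℝ)) (fun x : ℝ => 1 / Real.sin (π / x)) ∧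
    ∀ x : ℝ, 2 < x → 0 < iteratedDeriv 2 (fun x : ℝ => 1 / Real.sin (π / x)) x := by
  have hsign : ∀ x : ℝ, 2 < x → 0 < x ∧ 0 < sin (π / x) ∧ 0 < cos (π / x) := by
    intro x hx
    have hx0 : 0 < x := by linarith
    have hu0 : 0 < π / x := by positivity
    have hlt : π / x < π / 2 := div_lt_div_of_pos_left pi_pos two_pos hx
    exact ⟨hx0, sin_pos_of_pos_of_lt_pi hu0 (by linarith [pi_pos]),
      cos_pos_of_mem_Ioo ⟨by linarith [pi_pos], hlt⟩⟩
  have hpos : ∀ x : ℝ, 2 < x → 0 < iteratedDeriv 2 (fun x : ℝ => 1 / sin (π / x)) x := by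
    intro x hx
    obtain ⟨hx0, hs, hc⟩ := hsign x hx
    rw [iteratedDeriv_two_one_div_sin_div π hx0.ne' hs.ne']
    have hnum := two_mul_sin_mul_cos_lt_mul_one_add_cos_sq (by positivity : 0 < π / x) hc
    exact div_pos (mul_pos pi_pos (sub_pos.2 hnum)) (by positivity)
  refine ⟨strictConvexOn_of_deriv2_pos (convex_Ioi 2) ?_ ?_, hpos⟩
  · intro x hx
    obtain ⟨hx0, hs, -⟩ := hsign x hx
    exact (hasDerivAt_one_div_sin_div π hx0.ne' hs.ne').continuousAt.continuousWithinAt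
  · intro x hx
    rw [interior_Ioi] at hx
    rw [← iteratedDeriv_eq_iterate]
    exact hpos x hx
end

section
/- Let T be a balanced tree with characteristic tuple (c_1, …, c_l), so level j has n_j vertices with n_0 = 1 and n_j = n_{j−1}·c_j. Define polynomials Q_0 = 1, Q_1 = x, Q_{j+2}(x) = x·Q_{j+1}(x) − c_{l−j}·Q_j(x) for 0 ≤ j ≤ l−1. Then the characteristic polynomial of the adjacency matrix of T equals ∏_{j=1}^{l+1} Q_j(x)^{n_{l+1−j} − n_{l−j}}, where n_{−1} = 0. -/
/-!
Order the vertices by level. In `x I - A`, put `d` on the diagonal at the deepest level `m`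
instead of `x`. Eliminating level `m` by a Schur complement multiplies the determinant by
`d ^ n m` and, since every vertex of level `m - 1` has exactly `c m` children, changes the
diagonal entries of level `m - 1` to `x - c m / d`. Starting from `d = x = Q 1 / Q 0` at the
leaves, the recurrence for `Q` shows that after eliminating `k` levels the new entry is
`Q (k + 1) / Q k`. Hence, over the field of rational functions,
`det (x I - A) = ∏ k ≤ l, (Q (l + 1 - k) / Q (l - k)) ^ n k`, and this product telescopes to the
claimed one because `n` is monotone.
-/

open Polynomial Matrix Finset

lemma Fin.card_filter_val_div_eq {M N c i : ℕ} (hM : M = N * c) (hi : i < N) :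
    #{a : Fin M | (a : ℕ) / c = i} = c := by
  subst hM
  rw [← card_map finProdFinEquiv.symm.toEmbedding]
  convert card_product {(⟨i, hi⟩ : Fin N)} (univ : Finset (Fin c)) using 2
  · ext ⟨a, b⟩
    simp [Fin.ext_iff, Nat.add_mul_div_left _ _ b.pos, Nat.div_eq_of_lt b.2, eq_comm]
  · simp

lemma Polynomial.monic_and_natDegree_of_recurrence {R : Type*} [CommRing R] [Nontrivial R]
    {Q : ℕ → R[X]} {a : ℕ → R} {N : ℕ} (hQ0 : Q 0 = 1) (hQ1 : Q 1 = X)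
    (hQ : ∀ j, j + 2 ≤ N → Q (j + 2) = X * Q (j + 1) - C (a j) * Q j) :
    ∀ j ≤ N, (Q j).Monic ∧ (Q j).natDegree = j := by
  intro j
  induction j using Nat.twoStepInduction with
  | zero => simp [hQ0]
  | one => simp [hQ1]
  | more j ih0 ih1 =>
    intro hj
    obtain ⟨hmon0, hdeg0⟩ := ih0 (by omega)
    obtain ⟨hmon1, hdeg1⟩ := ih1 (by omega)
    have hXQ : (X * Q (j + 1)).natDegree = j + 2 := by
      rw [monic_X.natDegree_mul hmon1, natDegree_X, hdeg1]
      omega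
    have hlt : (C (a j) * Q j).natDegree < (X * Q (j + 1)).natDegree := by
      have := natDegree_C_mul_le (a j) (Q j)
      omega
    rw [hQ j hj]
    exact ⟨(monic_X.mul hmon1).sub_of_left (degree_lt_degree hlt),
      by rw [natDegree_sub_eq_left_of_natDegree_lt hlt, hXQ]⟩

lemma Finset.prod_range_div_pow_mul_pow {G : Type*} [CommGroupWithZero G] {p : ℕ → G}
    {e : ℕ → ℕ} {N : ℕ} (hp : ∀ k < N, p (k + 1) ≠ 0) (he : ∀ k < N, e k ≤ e (k + 1)) :
    (∏ k ∈ range N, (p k / p (k + 1)) ^ e k) * p N ^ e N =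
      p 0 ^ e 0 * ∏ k ∈ range N, p (k + 1) ^ (e (k + 1) - e k) := by
  induction N with
  | zero => simp
  | succ N ih =>
    have hpN : p (N + 1) ^ e N ≠ 0 := pow_ne_zero _ (hp N N.lt_succ_self)
    rw [prod_range_succ, prod_range_succ, ← mul_assoc, ← ih (fun k hk => hp k (by omega))
      (fun k hk => he k (by omega)), ← pow_sub_mul_pow (p (N + 1)) (he N N.lt_succ_self), div_pow]
    field_simp

lemma Finset.prod_range_div_pow_eq_prod_Icc {G : Type*} [CommGroupWithZero G] {q : ℕ → G}
    {n : ℕ → ℕ} {l : ℕ} (hq0 : q 0 = 1) (hq : ∀ j ∈ Icc 1 l, q j ≠ 0)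
    (hn : ∀ k < l, n k ≤ n (k + 1)) :
    ∏ k ∈ range (l + 1), (q (l + 1 - k) / q (l - k)) ^ n k =
      ∏ j ∈ Icc 1 (l + 1), q j ^ (n (l + 1 - j) - if j = l + 1 then 0 else n (l - j)) := by
  have key := prod_range_div_pow_mul_pow (p := fun k => q (l + 1 - k)) (e := n) (N := l)
    (fun k hk => hq _ (mem_Icc.2 ⟨by omega, by omega⟩)) hn
  simp only [Nat.add_sub_add_right, Nat.add_sub_cancel_left, Nat.sub_zero] at key
  have hreflect : ∏ j ∈ Icc 1 l, q j ^ (n (l + 1 - j) - if j = l + 1 then 0 else n (l - j)) =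
      ∏ k ∈ range l, q (l - k) ^ (n (k + 1) - n k) := by
    refine prod_nbij' (fun j => l - j) (fun k => l - k) ?_ ?_ ?_ ?_ ?_ <;>
      simp only [mem_Icc, mem_range] <;> intro j hj
    any_goals omega
    rw [if_neg (by omega)]
    congr 3 <;> omega
  rw [prod_range_succ, Nat.add_sub_cancel_left, Nat.sub_self, hq0, div_one, key,
    prod_Icc_succ_top (by omega), if_pos rfl, Nat.sub_self, Nat.sub_zero, mul_comm, hreflect]

namespace BalancedTree

abbrev Vertex (n : ℕ → ℕ) (m : ℕ) := (j : Fin (m + 1)) × Fin (n j)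

abbrev IsChildOf (c : ℕ → ℕ) (a b : ℕ × ℕ) : Prop := a.1 = b.1 + 1 ∧ a.2 / c a.1 = b.2

section Vertex

variable {n : ℕ → ℕ} {m : ℕ}

def Vertex.pos (v : Vertex n m) : ℕ × ℕ := (v.1, v.2)

lemma Vertex.pos_injective : Function.Injective (Vertex.pos (n := n) (m := m)) := by
  rintro ⟨⟨j, hj⟩, i⟩ ⟨⟨j', hj'⟩, i'⟩ h
  obtain ⟨rfl, h⟩ := Prod.ext_iff.1 h
  exact Sigma.ext rfl (heq_of_eq (Fin.ext h))

variable (n m) in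
def vertexSumEquiv : Vertex n m ⊕ Fin (n (m + 1)) ≃ Vertex n (m + 1) where
  toFun := Sum.elim (fun v => ⟨v.1.castSucc, v.2⟩) (fun i => ⟨Fin.last (m + 1), i⟩)
  invFun v := if h : (v.1 : ℕ) < m + 1 then .inl ⟨⟨v.1, h⟩, v.2⟩
    else .inr (Fin.cast (congrArg n (by omega)) v.2)
  left_inv := by
    rintro (v | i)
    · simp [Nat.lt_add_one_iff.mp v.1.2]
    · simp
  right_inv := by
    rintro ⟨⟨j, hj⟩, i⟩
    by_cases h : j < m + 1
    · simp [h]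
    · obtain rfl : j = m + 1 := by omega
      simp
      rfl

lemma vertexSumEquiv_inl_fst (v : Vertex n m) :
    ((vertexSumEquiv n m (.inl v)).1 : ℕ) = v.1 := rfl

lemma vertexSumEquiv_inr_fst (i : Fin (n (m + 1))) :
    ((vertexSumEquiv n m (.inr i)).1 : ℕ) = m + 1 := rfl

lemma pos_vertexSumEquiv_inl (v : Vertex n m) : (vertexSumEquiv n m (.inl v)).pos = v.pos := rfl

lemma pos_vertexSumEquiv_inr (i : Fin (n (m + 1))) :
    (vertexSumEquiv n m (.inr i)).pos = (m + 1, (i : ℕ)) := rfl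

end Vertex

variable (R : Type*) [CommRing R] (n c : ℕ → ℕ)

def adjMatrix (m : ℕ) : Matrix (Vertex n m) (Vertex n m) R :=
  of fun v w => if IsChildOf c v.pos w.pos ∨ IsChildOf c w.pos v.pos then 1 else 0

/-- `x I - A` with the diagonal entries of the deepest level `m` replaced by `d`. -/
def reducedCharMatrix (x d : R) (m : ℕ) : Matrix (Vertex n m) (Vertex n m) R :=
  diagonal (fun v => if (v.1 : ℕ) = m then d else x) - adjMatrix R n c m

def childMatrix (m : ℕ) : Matrix (Vertex n m) (Fin (n (m + 1))) R :=
  of fun v i => if IsChildOf c (m + 1, i) v.pos then 1 else 0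

variable {R n c}

lemma adjMatrix_succ_submatrix (m : ℕ) :
    (adjMatrix R n c (m + 1)).submatrix (vertexSumEquiv n m) (vertexSumEquiv n m) =
      fromBlocks (adjMatrix R n c m) (childMatrix R n c m) (childMatrix R n c m)ᵀ 0 := by
  have not_isChildOf_top (a : ℕ × ℕ) (k : ℕ) (ha : a.1 ≤ m + 1) :
      ¬IsChildOf c a (m + 1, k) := by
    rintro ⟨h, -⟩
    omega
  have hv (v : Vertex n m) : v.pos.1 ≤ m + 1 := Nat.le_succ_of_le (Nat.lt_succ_iff.mp v.1.2)
  ext (v | i) (w | j) <;>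
    simp only [adjMatrix, childMatrix, submatrix_apply, of_apply, transpose_apply,
      fromBlocks_apply₁₁, fromBlocks_apply₁₂, fromBlocks_apply₂₁, fromBlocks_apply₂₂,
      Matrix.zero_apply]
  · rfl
  -- `rw`, not `simp`: the positions also occur in the `Decidable` instances of the conditions.
  · rw [pos_vertexSumEquiv_inl, pos_vertexSumEquiv_inr]
    simp [not_isChildOf_top _ _ (hv v)]
  · rw [pos_vertexSumEquiv_inl, pos_vertexSumEquiv_inr]
    simp [not_isChildOf_top _ _ (hv w)]
  · rw [pos_vertexSumEquiv_inr, pos_vertexSumEquiv_inr]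
    simp [not_isChildOf_top ((m + 1 : ℕ), (i : ℕ)) j le_rfl]

lemma reducedCharMatrix_succ_submatrix (x d : R) (m : ℕ) :
    (reducedCharMatrix R n c x d (m + 1)).submatrix (vertexSumEquiv n m) (vertexSumEquiv n m) =
      fromBlocks (reducedCharMatrix R n c x x m) (-childMatrix R n c m)
        (-(childMatrix R n c m)ᵀ) (scalar _ d) := by
  rw [reducedCharMatrix, submatrix_sub, Pi.sub_apply, Pi.sub_apply, adjMatrix_succ_submatrix,
    submatrix_diagonal_equiv]
  ext (v | i) (w | j) <;>
    simp [reducedCharMatrix, diagonal_apply, vertexSumEquiv_inl_fst, vertexSumEquiv_inr_fst]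
  simp [Nat.ne_of_lt v.1.2]

lemma childMatrix_mul_transpose {m : ℕ} (hnm : n (m + 1) = n m * c (m + 1)) :
    childMatrix R n c m * (childMatrix R n c m)ᵀ =
      diagonal fun v => if (v.1 : ℕ) = m then (c (m + 1) : R) else 0 := by
  ext v w
  simp only [mul_apply, childMatrix, of_apply, transpose_apply, boole_mul, ← ite_and, sum_boole,
    diagonal_apply]
  by_cases h : v = w ∧ (v.1 : ℕ) = m
  · obtain ⟨rfl, hv⟩ := h
    simp only [and_self, hv, IsChildOf, Vertex.pos, true_and, if_true]
    exact congrArg _ (Fin.card_filter_val_div_eq hnm (lt_of_lt_of_eq v.2.2 (congrArg n hv)))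
  · rw [if_neg h, filter_eq_empty_iff.2, card_empty, Nat.cast_zero]
    rintro i - ⟨⟨hv, hiv⟩, ⟨hw, hiw⟩⟩
    exact h ⟨Vertex.pos_injective (Prod.ext (by omega) (hiv.symm.trans hiw)),
      Nat.succ_injective hv.symm⟩

lemma det_reducedCharMatrix_zero (hn0 : n 0 = 1) (x d : R) :
    (reducedCharMatrix R n c x d 0).det = d := by
  have : Unique (Vertex n 0) :=
    { default := ⟨0, Fin.cast hn0.symm 0⟩
      uniq := fun ⟨j, i⟩ => by
        obtain rfl : j = 0 := Fin.fin_one_eq_zero j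
        have hi : (i : ℕ) < 1 := lt_of_lt_of_eq i.2 hn0
        exact Sigma.ext rfl (heq_of_eq (Fin.ext (by simpa using hi))) }
  rw [det_unique]
  simp [reducedCharMatrix, adjMatrix, IsChildOf]

lemma algebraMap_charpoly_adjMatrix {S : Type*} [CommRing S] (f : R[X] →+* S) (m : ℕ) :
    f (adjMatrix R n c m).charpoly = (reducedCharMatrix S n c (f X) (f X) m).det := by
  rw [charpoly, RingHom.map_det]
  congr 1
  ext v w
  simp [charmatrix_apply, reducedCharMatrix, adjMatrix, diagonal_apply]
  split_ifs <;> simp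

variable {K : Type*} [Field K]

lemma det_reducedCharMatrix_succ {x d : K} {m : ℕ} (hd : d ≠ 0)
    (hnm : n (m + 1) = n m * c (m + 1)) :
    (reducedCharMatrix K n c x d (m + 1)).det =
      d ^ n (m + 1) * (reducedCharMatrix K n c x (x - c (m + 1) / d) m).det := by
  have := invertibleOfNonzero hd
  have : Invertible (scalar (Fin (n (m + 1))) d) := Invertible.map (scalar _) d
  have hinv : ⅟(scalar (Fin (n (m + 1))) d) = d⁻¹ • 1 := by
    rw [← map_invOf, invOf_eq_inv, scalar_apply, smul_one_eq_diagonal]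
  rw [← det_submatrix_equiv_self (vertexSumEquiv n m), reducedCharMatrix_succ_submatrix,
    det_fromBlocks₂₂, hinv]
  congr 1
  · simp
  · congr 1
    simp only [Matrix.neg_mul, Matrix.mul_neg, Matrix.mul_smul, Matrix.mul_one,
      Matrix.smul_mul, childMatrix_mul_transpose hnm]
    ext v w
    simp only [reducedCharMatrix, Matrix.sub_apply, Matrix.neg_apply, Matrix.smul_apply,
      diagonal_apply, smul_eq_mul]
    split_ifs <;> ring

lemma det_reducedCharMatrix_eq_prod {x : K} {m : ℕ} (r : ℕ → K) (hn0 : n 0 = 1)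
    (hn : ∀ k < m, n (k + 1) = n k * c (k + 1)) (hr : ∀ k < m, r k = x - c (k + 1) / r (k + 1))
    (hr0 : ∀ k < m, r (k + 1) ≠ 0) :
    (reducedCharMatrix K n c x (r m) m).det = ∏ k ∈ range (m + 1), r k ^ n k := by
  induction m with
  | zero => simp [det_reducedCharMatrix_zero hn0, hn0]
  | succ m ih =>
    rw [det_reducedCharMatrix_succ (hr0 m m.lt_succ_self) (hn m m.lt_succ_self),
      ← hr m m.lt_succ_self, ih (fun k hk => hn k (by omega)) (fun k hk => hr k (by omega))
      (fun k hk => hr0 k (by omega)), prod_range_succ _ (m + 1), mul_comm]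

lemma det_reducedCharMatrix_eq_prod_div {x : K} {m : ℕ} {q : ℕ → K} (hn0 : n 0 = 1)
    (hn : ∀ k < m, n (k + 1) = n k * c (k + 1)) (hq0 : q 0 = 1) (hq1 : q 1 = x)
    (hq : ∀ j ≤ m, q j ≠ 0) (hrec : ∀ j < m, q (j + 2) = x * q (j + 1) - c (m - j) * q j) :
    (reducedCharMatrix K n c x x m).det =
      ∏ k ∈ range (m + 1), (q (m + 1 - k) / q (m - k)) ^ n k := by
  have hr (k : ℕ) (hk : k < m) : q (m + 1 - k) / q (m - k) =
      x - c (k + 1) / (q (m + 1 - (k + 1)) / q (m - (k + 1))) := by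
    have h := hrec (m - (k + 1)) (by omega)
    rw [show m - (k + 1) + 2 = m + 1 - k by omega, show m - (k + 1) + 1 = m - k by omega,
      show m - (m - (k + 1)) = k + 1 by omega] at h
    have := hq (m - k) (by omega)
    have := hq (m - (k + 1)) (by omega)
    rw [show m + 1 - (k + 1) = m - k by omega, h]
    field_simp
  simpa [hq0, hq1] using det_reducedCharMatrix_eq_prod (fun k => q (m + 1 - k) / q (m - k)) hn0 hn
    hr (fun k hk => div_ne_zero (hq _ (by omega)) (hq _ (by omega)))

end BalancedTree

open BalancedTree

theorem balanced_tree_charpoly_general (l : ℕ)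
    (c : ℕ → ℕ) (hc : ∀ j : ℕ, 1 ≤ j → j ≤ l → 1 ≤ c j)
    (n : ℕ → ℕ) (hn0 : n 0 = 1) (hn : ∀ j : ℕ, j + 1 ≤ l → n (j + 1) = n j * c (j + 1))
    (Q : ℕ → Polynomial ℝ) (hQ0 : Q 0 = 1) (hQ1 : Q 1 = Polynomial.X)
    (hQ : ∀ j : ℕ, j ≤ l - 1 →
      Q (j + 2) = Polynomial.X * Q (j + 1) - Polynomial.C ((c (l - j) : ℝ)) * Q j)
    (A : Matrix ((j : Fin (l + 1)) × Fin (n j.1)) ((j : Fin (l + 1)) × Fin (n j.1)) ℝ)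
    (hA : ∀ v w : (j : Fin (l + 1)) × Fin (n j.1),
      A v w = if (v.1.1 = w.1.1 + 1 ∧ v.2.1 / c v.1.1 = w.2.1) ∨
                 (w.1.1 = v.1.1 + 1 ∧ w.2.1 / c w.1.1 = v.2.1) then 1 else 0) :
    A.charpoly = ∏ j ∈ Finset.Icc 1 (l + 1),
      Q j ^ (n (l + 1 - j) - (if j = l + 1 then 0 else n (l - j))) := by
  set φ := algebraMap ℝ[X] (RatFunc ℝ)
  have hQ_ne (j : ℕ) (hj : j ≤ l + 1) : φ (Q j) ≠ 0 :=
    RatFunc.algebraMap_ne_zero ((monic_and_natDegree_of_recurrence (N := l + 1) hQ0 hQ1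
      (fun j hj => hQ j (by omega)) j hj).1.ne_zero)
  have hA' : A = adjMatrix ℝ n c l := by
    ext v w
    rw [hA]
    rfl
  have hn_mono (k : ℕ) (hk : k < l) : n k ≤ n (k + 1) := by
    rw [hn k hk]
    exact Nat.le_mul_of_pos_right _ (hc (k + 1) (by omega) hk)
  apply RatFunc.algebraMap_injective ℝ
  rw [hA', algebraMap_charpoly_adjMatrix,
    det_reducedCharMatrix_eq_prod_div (q := fun j => φ (Q j)) hn0 hn (by simp [hQ0])
      (by simp [φ, hQ1]) (fun j hj => hQ_ne j (by omega))
      (fun j hj => by simp [φ, hQ j (by omega)]),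
    prod_range_div_pow_eq_prod_Icc (by simp [hQ0]) (fun j hj => hQ_ne j (by simp at hj; omega))
      hn_mono, map_prod]
  simp [φ]

/-- A balanced tree with characteristic tuple `(c 1, …, c l)`: level `j` has `n j` vertices
(`n 0 = 1`, `n (j+1) = n j * c (j+1)`), and vertex `i` at level `j+1` is adjacent to its
parent, vertex `i / c (j+1)`, at level `j`.  With `Q 0 = 1`, `Q 1 = X` and
`Q (j+2) = X * Q (j+1) - c (l-j) * Q j` for `0 ≤ j ≤ l-1`, the characteristic polynomial
of the adjacency matrix equals `∏_{j=1}^{l+1} Q j ^ (n (l+1-j) - n (l-j))`, where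
`n (-1) = 0` (i.e. for `j = l+1` the exponent is `n 0`). -/
theorem balanced_tree_charpoly (l : ℕ) (hl : 1 ≤ l)
    (c : ℕ → ℕ) (hc : ∀ j : ℕ, 1 ≤ j → j ≤ l → 1 ≤ c j)
    (n : ℕ → ℕ) (hn0 : n 0 = 1) (hn : ∀ j : ℕ, j + 1 ≤ l → n (j + 1) = n j * c (j + 1))
    (Q : ℕ → Polynomial ℝ) (hQ0 : Q 0 = 1) (hQ1 : Q 1 = Polynomial.X)
    (hQ : ∀ j : ℕ, j ≤ l - 1 →
      Q (j + 2) = Polynomial.X * Q (j + 1) - Polynomial.C ((c (l - j) : ℝ)) * Q j)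
    (A : Matrix ((j : Fin (l + 1)) × Fin (n j.1)) ((j : Fin (l + 1)) × Fin (n j.1)) ℝ)
    (hA : ∀ v w : (j : Fin (l + 1)) × Fin (n j.1),
      A v w = if (v.1.1 = w.1.1 + 1 ∧ v.2.1 / c v.1.1 = w.2.1) ∨
                 (w.1.1 = v.1.1 + 1 ∧ w.2.1 / c w.1.1 = v.2.1) then 1 else 0) :
    A.charpoly = ∏ j ∈ Finset.Icc 1 (l + 1),
      Q j ^ (n (l + 1 - j) - (if j = l + 1 then 0 else n (l - j))) :=
  balanced_tree_charpoly_general l c hc n hn0 hn Q hQ0 hQ1 hQ A hA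
end

section
/- For integer k ≥ 2, the characteristic polynomial of the dendrimer d(2, k) equals x^{(k−1)²} · (x² − k + 1)^{k−1} · (x² − 2k + 1). -/
/-!
List the vertices of `d(2,k)` level by level: root, its `k` children, their `k(k-1)` children.
Then `tI - A` is block tridiagonal with scalar diagonal blocks, and each off-diagonal block is a
parent incidence matrix `P` with `P Pᵀ = d • 1`, `d` the number of children per parent.
Taking Schur complements twice (first the leaves, then the middle level) gives, with
`y = t - (k-1)/t`,
  `det (tI - A) = t ^ (k(k-1)) * y ^ k * (t - k / y)`
for all `t` with `t ≠ 0` and `t² ≠ k - 1`, which simplifies to the claimed polynomial evaluated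
at `t`. Two polynomials agreeing at infinitely many points are equal.
-/

open Polynomial Matrix

theorem Matrix.det_fromBlocks_smul_one₂₂ {K m n : Type*} [Field K] [Fintype m] [Fintype n]
    [DecidableEq m] [DecidableEq n] (A : Matrix m m K) (B : Matrix m n K) (C : Matrix n m K)
    {y : K} (hy : y ≠ 0) :
    (fromBlocks A B C (y • 1)).det = y ^ Fintype.card n * (A - y⁻¹ • (B * C)).det := by
  let _ : Invertible (y • (1 : Matrix n n K)) :=
    ⟨y⁻¹ • 1, by simp [smul_smul, hy], by simp [smul_smul, hy]⟩
  rw [det_fromBlocks₂₂, det_smul, det_one, mul_one]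
  simp only [show ⅟(y • (1 : Matrix n n K)) = y⁻¹ • 1 from rfl, Matrix.mul_smul, Matrix.mul_one,
    Matrix.smul_mul]

/-- Incidence between `m` parents and `m * d` children, child `i` having parent `i / d`. -/
def parentMatrix (K : Type*) [Zero K] [One K] (m d : ℕ) : Matrix (Fin m) (Fin (m * d)) K :=
  of fun u i => if i.divNat = u then 1 else 0

theorem parentMatrix_mul_transpose {K : Type*} [Semiring K] (m d : ℕ) :
    parentMatrix K m d * (parentMatrix K m d)ᵀ = (d : K) • 1 := by
  have divNat_finProdFinEquiv (p : Fin m × Fin d) : (finProdFinEquiv p).divNat = p.1 :=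
    congrArg Prod.fst (finProdFinEquiv.symm_apply_apply p)
  ext u v
  rw [mul_apply, ← finProdFinEquiv.sum_comp]
  by_cases huv : u = v <;>
    simp [parentMatrix, divNat_finProdFinEquiv, Fintype.sum_prod_type, one_apply, huv, eq_comm]

/-- The forest of `a` rooted trees in which every root has `b` children and each of those has
`c` children, with vertices listed level by level. -/
def threeLevelTreeAdj (K : Type*) [Zero K] [One K] (a b c : ℕ) :
    Matrix ((Fin a ⊕ Fin (a * b)) ⊕ Fin (a * b * c)) ((Fin a ⊕ Fin (a * b)) ⊕ Fin (a * b * c)) K :=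
  fromBlocks (fromBlocks 0 (parentMatrix K a b) (parentMatrix K a b)ᵀ 0)
    (fromRows 0 (parentMatrix K (a * b) c)) (fromRows 0 (parentMatrix K (a * b) c))ᵀ 0

theorem det_scalar_sub_threeLevelTreeAdj {K : Type*} [Field K] (a b c : ℕ) {t : K} (ht : t ≠ 0)
    (hy : t - c / t ≠ 0) :
    (scalar _ t - threeLevelTreeAdj K a b c).det =
      t ^ (a * b * c) * (t - c / t) ^ (a * b) * (t - b / (t - c / t)) ^ a := by
  set P := parentMatrix K a b
  set Q : Matrix (Fin a ⊕ Fin (a * b)) (Fin (a * b * c)) K := fromRows 0 (parentMatrix K (a * b) c)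
  have hQQ : Q * Qᵀ = fromBlocks 0 0 0 ((c : K) • 1) := by
    rw [transpose_fromRows, fromRows_mul_fromCols, parentMatrix_mul_transpose]
    simp
  have hblocks : scalar _ t - threeLevelTreeAdj K a b c =
      fromBlocks (fromBlocks (t • 1) (-P) (-Pᵀ) (t • 1)) (-Q) (-Qᵀ) (t • 1) := by
    rw [scalar_apply, ← smul_one_eq_diagonal, ← fromBlocks_one, ← fromBlocks_one, fromBlocks_smul,
      fromBlocks_smul]
    simp [threeLevelTreeAdj, sub_eq_add_neg, fromBlocks_neg, fromBlocks_add, P, Q, -fromBlocks_one]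
  have hleaves : fromBlocks (t • 1) (-P) (-Pᵀ) (t • 1) - t⁻¹ • (-Q * -Qᵀ) =
      fromBlocks (t • 1) (-P) (-Pᵀ) ((t - c / t) • 1) := by
    rw [Matrix.neg_mul, Matrix.mul_neg, neg_neg, hQQ]
    simp [fromBlocks_smul, sub_eq_add_neg, fromBlocks_neg, fromBlocks_add, add_smul,
      div_eq_inv_mul, smul_smul]
  rw [hblocks, det_fromBlocks_smul_one₂₂ _ _ _ ht, hleaves, det_fromBlocks_smul_one₂₂ _ _ _ hy,
    Matrix.neg_mul, Matrix.mul_neg, neg_neg, parentMatrix_mul_transpose, smul_smul, ← sub_smul,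
    det_smul, det_one]
  simp only [Fintype.card_fin, div_eq_inv_mul]
  ring

theorem det_scalar_sub_threeLevelTreeAdj_one_succ {K : Type*} [Field K] (j : ℕ) {t : K}
    (ht : t ≠ 0) (htj : t ^ 2 ≠ j) :
    (scalar _ t - threeLevelTreeAdj K 1 (j + 1) j).det =
      t ^ (j ^ 2) * (t ^ 2 - j) ^ j * (t ^ 2 - (2 * j + 1)) := by
  have hyt : (t - j / t) * t = t ^ 2 - j := by field_simp
  have hy : t - j / t ≠ 0 := fun hy ↦ htj (by rw [← sub_eq_zero, ← hyt, hy, zero_mul])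
  rw [det_scalar_sub_threeLevelTreeAdj 1 (j + 1) j ht hy]
  generalize t - j / t = y at hy hyt ⊢
  push_cast
  calc _ = t ^ (j ^ 2) * (y * t) ^ j * (y * t - (j + 1)) := by
        rw [one_mul, pow_one, show (j + 1) * j = j ^ 2 + j by ring, pow_add, pow_succ, mul_pow]
        field_simp
        ring
    _ = _ := by rw [hyt]; ring

theorem charpoly_threeLevelTreeAdj_one_succ {K : Type*} [Field K] [LinearOrder K]
    [IsStrictOrderedRing K] (j : ℕ) :
    (threeLevelTreeAdj K 1 (j + 1) j).charpoly =
      X ^ (j ^ 2) * (X ^ 2 - C (j : K)) ^ j * (X ^ 2 - C (2 * j + 1 : K)) := by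
  refine eq_of_infinite_eval_eq _ _
    ((Set.Ioi_infinite ((j : K) + 1)).mono fun t (ht : (j : K) + 1 < t) ↦ ?_)
  have hj : (0 : K) ≤ j := j.cast_nonneg
  rw [Set.mem_ofPred_eq, eval_charpoly,
    det_scalar_sub_threeLevelTreeAdj_one_succ j (by linarith : 0 < t).ne'
      (by nlinarith : (j : K) < t ^ 2).ne']
  simp

def sumFinEquivSigmaFinThree {n : ℕ → ℕ} {l₀ l₁ l₂ : ℕ} (h₀ : n 0 = l₀) (h₁ : n 1 = l₁)
    (h₂ : n 2 = l₂) : (Fin l₀ ⊕ Fin l₁) ⊕ Fin l₂ ≃ Σ j : Fin 3, Fin (n j) where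
  toFun
    | .inl (.inl i) => ⟨0, Fin.cast h₀.symm i⟩
    | .inl (.inr i) => ⟨1, Fin.cast h₁.symm i⟩
    | .inr i => ⟨2, Fin.cast h₂.symm i⟩
  invFun
    | ⟨0, i⟩ => .inl (.inl (Fin.cast h₀ i))
    | ⟨1, i⟩ => .inl (.inr (Fin.cast h₁ i))
    | ⟨2, i⟩ => .inr (Fin.cast h₂ i)
  left_inv := by rintro ((i | i) | i) <;> rfl
  right_inv := by rintro ⟨j, i⟩; fin_cases j <;> rfl

theorem submatrix_sumFinEquivSigmaFinThree_eq_threeLevelTreeAdj {K : Type*} [Zero K] [One K]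
    (a b c : ℕ) (p n : ℕ → ℕ) (hp₁ : p 1 = b) (hp₂ : p 2 = c)
    (hn₀ : n 0 = a) (hn₁ : n 1 = a * b) (hn₂ : n 2 = a * b * c)
    (A : Matrix ((j : Fin 3) × Fin (n j.1)) ((j : Fin 3) × Fin (n j.1)) K)
    (hA : ∀ v w : (j : Fin 3) × Fin (n j.1),
      A v w = if (v.1.1 = w.1.1 + 1 ∧ v.2.1 / p v.1.1 = w.2.1) ∨
                 (w.1.1 = v.1.1 + 1 ∧ w.2.1 / p w.1.1 = v.2.1) then 1 else 0) :
    A.submatrix (sumFinEquivSigmaFinThree hn₀ hn₁ hn₂) (sumFinEquivSigmaFinThree hn₀ hn₁ hn₂) =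
      threeLevelTreeAdj K a b c := by
  ext ((i | i) | i) ((j | j) | j) <;>
    simp [sumFinEquivSigmaFinThree, threeLevelTreeAdj, parentMatrix, hA, hp₁, hp₂, Fin.ext_iff]

/-- The dendrimer `d(2,k)`: levels 0,1,2 with `n 0 = 1`, `n 1 = k`, `n 2 = k*(k-1)`;
each vertex `i` at level `j+1` is adjacent to vertex `i / c (j+1)` at level `j`,
where `c 1 = k` and `c 2 = k - 1`. -/
theorem dendrimer_two_charpoly (k : ℕ) (hk : 2 ≤ k)
    (c n : ℕ → ℕ) (hc1 : c 1 = k) (hc2 : c 2 = k - 1)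
    (hn0 : n 0 = 1) (hn1 : n 1 = k) (hn2 : n 2 = k * (k - 1))
    (A : Matrix ((j : Fin 3) × Fin (n j.1)) ((j : Fin 3) × Fin (n j.1)) ℝ)
    (hA : ∀ v w : (j : Fin 3) × Fin (n j.1),
      A v w = if (v.1.1 = w.1.1 + 1 ∧ v.2.1 / c v.1.1 = w.2.1) ∨
                 (w.1.1 = v.1.1 + 1 ∧ w.2.1 / c w.1.1 = v.2.1) then 1 else 0) :
    A.charpoly = Polynomial.X ^ ((k - 1) ^ 2) *
      (Polynomial.X ^ 2 - Polynomial.C ((k : ℝ) - 1)) ^ (k - 1) *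
      (Polynomial.X ^ 2 - Polynomial.C (2 * (k : ℝ) - 1)) := by
  obtain ⟨j, rfl⟩ : ∃ j, k = j + 1 := ⟨k - 1, by omega⟩
  have hn1' : n 1 = 1 * (j + 1) := by rw [hn1, one_mul]
  have hn2' : n 2 = 1 * (j + 1) * j := by rw [hn2, one_mul, Nat.add_sub_cancel]
  rw [← charpoly_reindex (sumFinEquivSigmaFinThree hn0 hn1' hn2').symm, reindex_apply,
    Equiv.symm_symm, submatrix_sumFinEquivSigmaFinThree_eq_threeLevelTreeAdj 1 (j + 1) j c n hc1
      (by rw [hc2, Nat.add_sub_cancel]) hn0 hn1' hn2' A hA,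
    charpoly_threeLevelTreeAdj_one_succ, Nat.add_sub_cancel]
  push_cast
  ring_nf
end

section
/- For every integer l ≥ 1, the graph energy of the path on 2l+1 vertices equals 2(cot(π/(4l+4)) − 1). -/
/-!
For `n = 2l + 1`, the vector `j ↦ sin (j h π / (n + 1))` is an eigenvector of the path's adjacency
matrix for `2 cos (h π / (n + 1))`, because `sin (x - α) + sin (x + α) = 2 cos α sin x` and the
boundary terms `j = 0, n + 1` vanish. These `n` values are distinct, so they are the whole
spectrum. Their absolute values are symmetric under `h ↦ n + 1 - h` and vanish at `h = l + 1`, and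
the sum of the positive half telescopes after multiplication by `sin (θ / 2)`, `θ = π / (n + 1)`,
to `cot (θ / 2) - 1`.
-/

open Real Matrix

theorem Matrix.IsHermitian.mem_range_eigenvalues_of_mulVec_eq_smul {𝕜 n : Type*} [RCLike 𝕜]
    [Fintype n] [DecidableEq n] {A : Matrix n n 𝕜} (hA : A.IsHermitian) {μ : ℝ} {v : n → 𝕜}
    (hv : v ≠ 0) (h : A *ᵥ v = (μ : 𝕜) • v) : μ ∈ Set.range hA.eigenvalues := by
  have hμ : Module.End.HasEigenvalue (Matrix.toLin' A) (μ : 𝕜) :=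
    Module.End.hasEigenvalue_of_hasEigenvector
      ⟨Module.End.mem_eigenspace_iff.mpr (by rwa [Matrix.toLin'_apply]), hv⟩
  have := hμ.mem_spectrum
  rw [Matrix.spectrum_toLin', hA.spectrum_eq_image_range] at this
  obtain ⟨_, hi, h⟩ := this
  exact RCLike.ofReal_injective h ▸ hi

theorem Fintype.sum_comp_eq_of_range_subset {ι α M : Type*} [Fintype ι] [AddCommMonoid M]
    {e f : ι → α} (hf : Function.Injective f) (hfe : Set.range f ⊆ Set.range e) (g : α → M) :
    ∑ i, g (e i) = ∑ i, g (f i) := by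
  choose σ hσ using fun i => hfe (Set.mem_range_self i)
  have hσinj : Function.Injective σ := fun i j hij => hf (by rw [← hσ i, ← hσ j, hij])
  rw [← (Finite.injective_iff_bijective.mp hσinj).sum_comp]
  simp only [hσ]

theorem path_adjacency_mulVec_apply {R : Type*} [NonAssocSemiring R] {n : ℕ}
    {A : Matrix (Fin n) (Fin n) R}
    (hA : ∀ i j : Fin n, A i j = if i.1 + 1 = j.1 ∨ j.1 + 1 = i.1 then 1 else 0)
    {w : ℕ → R} (hw₀ : w 0 = 0) (hwn : w (n + 1) = 0) (i : Fin n) :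
    (A *ᵥ fun j => w (j.1 + 1)) i = w i.1 + w (i.1 + 2) := by
  have hterm : ∀ m, (if i.1 + 1 = m ∨ m + 1 = i.1 then (1 : R) else 0) * w (m + 1) =
      (if i.1 + 1 = m then w (i.1 + 2) else 0) + (if i.1 - 1 = m then w i.1 else 0) := by
    intro m
    by_cases hup : i.1 + 1 = m
    · simp [hup, show i.1 - 1 ≠ m by omega, show i.1 + 2 = m + 1 by omega]
    by_cases hdown : m + 1 = i.1
    · simp [hup, hdown, show i.1 - 1 = m by omega]
    rcases Nat.eq_zero_or_pos i.1 with hi | hi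
    · simp [hup, hdown, show w i.1 = 0 by rw [hi, hw₀]]
    · simp [hup, hdown, show i.1 - 1 ≠ m by omega]
  simp only [Matrix.mulVec, dotProduct, hA]
  rw [Fin.sum_univ_eq_sum_range
      (fun m => (if i.1 + 1 = m ∨ m + 1 = i.1 then (1 : R) else 0) * w (m + 1)),
    Finset.sum_congr rfl fun m _ => hterm m, Finset.sum_add_distrib, Finset.sum_ite_eq,
    Finset.sum_ite_eq, add_comm]
  have hin : i.1 < n := i.2
  congr 1
  · simp [show i.1 - 1 < n by omega]
  · rcases lt_or_eq_of_le (show i.1 + 1 ≤ n by omega) with hi | hi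
    · simp [hi]
    · simp [hi, show i.1 + 2 = n + 1 by omega, hwn]

theorem path_adjacency_mulVec_sin {n : ℕ} {A : Matrix (Fin n) (Fin n) ℝ}
    (hA : ∀ i j : Fin n, A i j = if i.1 + 1 = j.1 ∨ j.1 + 1 = i.1 then 1 else 0)
    {α : ℝ} (hα : sin ((n + 1) * α) = 0) :
    (A *ᵥ fun j => sin ((j.1 + 1 : ℕ) * α)) = (2 * cos α) • fun j => sin ((j.1 + 1 : ℕ) * α) := by
  funext i
  rw [path_adjacency_mulVec_apply hA (w := fun m : ℕ => sin (m * α)) (by simp)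
    (by exact_mod_cast hα), Pi.smul_apply, smul_eq_mul, mul_right_comm, two_mul_sin_mul_cos]
  push_cast
  ring_nf

theorem sum_range_two_cos_mul_sin_half (θ : ℝ) (m : ℕ) :
    (∑ k ∈ Finset.range m, 2 * cos ((k + 1) * θ)) * sin (θ / 2) =
      sin ((m + 1 / 2) * θ) - sin (θ / 2) := by
  have hstep : ∀ k : ℕ, 2 * cos ((k + 1) * θ) * sin (θ / 2) =
      sin (((k + 1 : ℕ) + 1 / 2) * θ) - sin ((k + 1 / 2) * θ) := by
    intro k
    push_cast
    rw [show ((k : ℝ) + 1 + 1 / 2) * θ = (k + 1) * θ + θ / 2 by ring,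
      show ((k : ℝ) + 1 / 2) * θ = (k + 1) * θ - θ / 2 by ring, sin_add, sin_sub]
    ring
  rw [Finset.sum_mul, Finset.sum_congr rfl fun k _ => hstep k,
    Finset.sum_range_sub (fun k : ℕ => sin ((k + 1 / 2) * θ))]
  simp [div_eq_inv_mul]

theorem sum_range_two_cos_eq_cot_sub_one (l : ℕ) :
    ∑ k ∈ Finset.range l, 2 * cos ((k + 1) * (π / (2 * l + 2))) = cot (π / (4 * l + 4)) - 1 := by
  set θ := π / (2 * l + 2)
  have hhalf : θ / 2 = π / (4 * l + 4) := by rw [div_div]; ring_nf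
  have hsin : 0 < sin (θ / 2) := by
    rw [hhalf]
    apply sin_pos_of_pos_of_lt_pi (by positivity)
    exact div_lt_self pi_pos (by linarith [(l.cast_nonneg : (0 : ℝ) ≤ l)])
  have hend : sin ((l + 1 / 2) * θ) = cos (θ / 2) := by
    rw [← sin_pi_div_two_sub]; congr 1; simp only [θ]; field_simp; ring
  have htel := sum_range_two_cos_mul_sin_half θ l
  rw [hend] at htel
  rw [← hhalf, cot_eq_cos_div_sin, eq_sub_iff_add_eq, eq_div_iff hsin.ne']
  linarith

theorem sum_range_abs_two_cos_eq (l : ℕ) :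
    ∑ k ∈ Finset.range (2 * l + 1), |2 * cos ((k + 1) * (π / (2 * l + 2)))| =
      2 * ∑ k ∈ Finset.range l, 2 * cos ((k + 1) * (π / (2 * l + 2))) := by
  set θ := π / (2 * l + 2)
  set f : ℕ → ℝ := fun k => |2 * cos ((k + 1) * θ)|
  have hmid : f l = 0 := by
    simp only [f, θ, show ((l : ℝ) + 1) * (π / (2 * l + 2)) = π / 2 by field_simp,
      cos_pi_div_two, mul_zero, abs_zero]
  have hreflect : ∀ k < l, f (l + 1 + (l - 1 - k)) = f k := by
    intro k hk
    have : ((l + 1 + (l - 1 - k) : ℕ) + 1 : ℝ) * θ = π - (k + 1) * θ := by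
      rw [Nat.cast_add, Nat.cast_sub (by omega), Nat.cast_sub (by omega)]
      simp only [θ]; field_simp; push_cast; ring
    simp only [f, this, cos_pi_sub, mul_neg, abs_neg]
  have hpos : ∀ k < l, f k = 2 * cos ((k + 1) * θ) := by
    intro k hk
    refine abs_of_nonneg (mul_nonneg two_pos.le (cos_nonneg_of_mem_Icc ⟨?_, ?_⟩))
    · linarith [show 0 ≤ ((k : ℝ) + 1) * θ by positivity, pi_pos]
    · simp only [θ]
      rw [← mul_div_assoc, div_le_div_iff₀ (by positivity) two_pos]
      nlinarith [pi_pos, show (k : ℝ) + 1 ≤ l by exact_mod_cast hk]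
  change ∑ k ∈ Finset.range (2 * l + 1), f k = _
  rw [show 2 * l + 1 = (l + 1) + l by ring, Finset.sum_range_add, Finset.sum_range_succ, hmid,
    ← Finset.sum_range_reflect (fun k => f (l + 1 + k)) l]
  rw [Finset.sum_congr rfl fun k hk => hreflect k (Finset.mem_range.mp hk)]
  rw [Finset.sum_congr rfl fun k hk => hpos k (Finset.mem_range.mp hk)]
  ring

theorem add_one_mul_pi_div_mem_Ioo {n : ℕ} (i : Fin n) :
    ((i : ℝ) + 1) * (π / (n + 1)) ∈ Set.Ioo 0 π := by
  refine ⟨by positivity, ?_⟩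
  rw [← mul_div_assoc, div_lt_iff₀ (by positivity)]
  nlinarith [pi_pos, show (i : ℝ) + 1 ≤ n by exact_mod_cast i.2]

theorem strictAnti_two_cos_mul_pi_div (n : ℕ) :
    StrictAnti fun i : Fin n => 2 * cos ((i + 1 : ℝ) * (π / (n + 1))) := by
  have hmem (i : Fin n) := Set.Ioo_subset_Icc_self (add_one_mul_pi_div_mem_Ioo i)
  intro i j hij
  have hlt : ((i : ℝ) + 1) * (π / (n + 1)) < ((j : ℝ) + 1) * (π / (n + 1)) := by
    gcongr
    exact_mod_cast hij
  linarith [strictAntiOn_cos (hmem i) (hmem j) hlt]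

theorem path_energy_general (l : ℕ)
    (A : Matrix (Fin (2 * l + 1)) (Fin (2 * l + 1)) ℝ)
    (hA : ∀ i j : Fin (2 * l + 1),
      A i j = if i.1 + 1 = j.1 ∨ j.1 + 1 = i.1 then 1 else 0)
    (hH : A.IsHermitian) :
    ∑ i, |hH.eigenvalues i| = 2 * (Real.cot (π / (4 * l + 4)) - 1) := by
  set θ : ℝ := π / (2 * l + 2)
  have hθ : θ = π / ((2 * l + 1 : ℕ) + 1) := by push_cast; ring
  have heig : ∀ i : Fin (2 * l + 1), 2 * cos ((i + 1 : ℝ) * θ) ∈ Set.range hH.eigenvalues := by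
    intro i
    have hα : sin (((2 * l + 1 : ℕ) + 1) * ((i + 1 : ℝ) * θ)) = 0 := by
      rw [hθ, ← mul_assoc, mul_comm _ ((i : ℝ) + 1), mul_assoc, mul_div_cancel₀ _ (by positivity)]
      exact_mod_cast sin_nat_mul_pi (i + 1)
    have hv : (fun j : Fin (2 * l + 1) => sin ((j.1 + 1 : ℕ) * ((i + 1 : ℝ) * θ))) ≠ 0 := by
      have ⟨hpos, hlt⟩ := hθ ▸ add_one_mul_pi_div_mem_Ioo i
      exact fun h => (sin_pos_of_pos_of_lt_pi hpos hlt).ne' (by simpa using congrFun h 0)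
    exact hH.mem_range_eigenvalues_of_mulVec_eq_smul hv
      (by simpa using path_adjacency_mulVec_sin hA hα)
  rw [Fintype.sum_comp_eq_of_range_subset (hθ ▸ strictAnti_two_cos_mul_pi_div _).injective
      (Set.range_subset_iff.mpr heig),
    Fin.sum_univ_eq_sum_range (fun k => |2 * cos ((k + 1 : ℝ) * θ)|),
    sum_range_abs_two_cos_eq, sum_range_two_cos_eq_cot_sub_one]

/-- The energy of the path on `2l+1` vertices (sum of absolute values of the
eigenvalues of its adjacency matrix) equals `2(cot(π/(4l+4)) − 1)`. -/
theorem path_energy (l : ℕ) (hl : 1 ≤ l)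
    (A : Matrix (Fin (2 * l + 1)) (Fin (2 * l + 1)) ℝ)
    (hA : ∀ i j : Fin (2 * l + 1),
      A i j = if i.1 + 1 = j.1 ∨ j.1 + 1 = i.1 then 1 else 0)
    (hH : A.IsHermitian) :
    ∑ i, |hH.eigenvalues i| = 2 * (Real.cot (π / (4 * l + 4)) - 1) :=
  path_energy_general l A hA hH
end
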